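/- arXiv:1809.01256 — 3 statements merged into one kernel-verified Lean document; each statement's English description precedes it below -/
import Mathlib

section
/- Let 0 < α < n, y₀ ∈ ℝ^n, r > 0, and 0 < β < n. For f(y) = χ_{B(y₀,r)}(y) · |y − y₀|^{−β}, and A an invertible n×n matrix with M = ‖A‖, for every x ∈ B(Ay₀, Mr) the integral T_A f(x) = ∫ |x − Ay|^{−(n−α)} f(y) dy satisfies T_A f(x) ≥ c · |x − Ay₀|^{−(β−α)} for some constant c > 0 depending only on n, α, β, M. -/
/-!
For `x ≠ A y₀` let `t = ‖x - A y₀‖` and integrate only over `ball y₀ (t / ‖A‖) ⊆ ball y₀ r`. There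
`‖x - A y‖ ≤ 2t` and `‖y - y₀‖ < t / ‖A‖`, so the integral is at least
`(2t)^{-(n-α)} (t/‖A‖)^{-β} |ball y₀ (t/‖A‖)| = ω 2^{α-n} ‖A‖^{β-n} t^{α-β}`, `ω` the volume of
the unit ball. At `x = A y₀` the left-hand side is `0` (Lean's `0 ^ s = 0` for `s ≠ 0`) unless
`β = α`, and then the whole ball `ball y₀ r` gives the bound `ω ‖A‖^{α-n}`.
-/

open MeasureTheory Metric ENNReal

section KernelLowerBound

variable {E F : Type*} [NormedAddCommGroup E] [NormedSpace ℝ E] [NormedAddCommGroup F]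
  [NormedSpace ℝ F]

lemma norm_sub_apply_le_of_mem_ball (A : E →L[ℝ] F) (x : F) {y₀ y : E} {ρ : ℝ}
    (hy : y ∈ ball y₀ ρ) : ‖x - A y‖ ≤ ‖x - A y₀‖ + ‖A‖ * ρ :=
  calc ‖x - A y‖ ≤ ‖x - A y₀‖ + ‖A (y₀ - y)‖ := by
        rw [map_sub]; exact norm_sub_le_norm_sub_add_norm_sub _ _ _
    _ ≤ ‖x - A y₀‖ + ‖A‖ * ρ := by
        gcongr
        refine A.le_of_opNorm_le_of_le le_rfl ?_
        rw [norm_sub_rev]; exact (mem_ball_iff_norm.mp hy).le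

/-- The pointwise bound on `ball y₀ ρ` fails at `y₀` and at `A⁻¹ x`, where Lean's `0 ^ (-s)` is `0`;
these points are null. -/
lemma ofReal_mul_measure_ball_le_lintegral [MeasurableSpace E] [BorelSpace E] (μ : Measure E)
    [NullSingletonClass μ] (A : E →L[ℝ] F) (hA : Function.Injective A) {γ β ρ r : ℝ}
    (hγ : 0 ≤ γ) (hβ : 0 ≤ β) (hρr : ρ ≤ r) (x : F) (y₀ : E) :
    ENNReal.ofReal ((‖x - A y₀‖ + ‖A‖ * ρ) ^ (-γ) * ρ ^ (-β)) * μ (ball y₀ ρ) ≤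
      ∫⁻ y, ENNReal.ofReal (‖x - A y‖ ^ (-γ) *
        Set.indicator (ball y₀ r) (fun y => ‖y - y₀‖ ^ (-β)) y) ∂μ := by
  have hnull : μ ({y₀} ∪ {y | A y = x}) = 0 :=
    measure_union_null (measure_singleton y₀) <|
      Set.Subsingleton.measure_zero (fun _ h₁ _ h₂ => hA (h₁.trans h₂.symm)) μ
  have hbound : ∀ᵐ y ∂μ, y ∈ ball y₀ ρ →
      ENNReal.ofReal ((‖x - A y₀‖ + ‖A‖ * ρ) ^ (-γ) * ρ ^ (-β)) ≤
        ENNReal.ofReal (‖x - A y‖ ^ (-γ) *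
          Set.indicator (ball y₀ r) (fun y => ‖y - y₀‖ ^ (-β)) y) := by
    refine measure_eq_zero_iff_ae_notMem.mp hnull |>.mono fun y hy hyρ => ?_
    simp only [Set.mem_union, Set.mem_singleton_iff, Set.mem_ofPred_eq, not_or] at hy
    have hy₀ : 0 < ‖y - y₀‖ := norm_pos_iff.mpr (sub_ne_zero.mpr hy.1)
    have hρ : 0 < ρ := hy₀.trans (mem_ball_iff_norm.mp hyρ)
    have hx : 0 < ‖x - A y‖ := norm_pos_iff.mpr (sub_ne_zero.mpr (Ne.symm hy.2))
    rw [Set.indicator_of_mem (ball_subset_ball hρr hyρ)]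
    gcongr ENNReal.ofReal (?_ * ?_)
    · exact Real.rpow_le_rpow_of_nonpos hx (norm_sub_apply_le_of_mem_ball A x hyρ)
        (neg_nonpos.mpr hγ)
    · exact Real.rpow_le_rpow_of_nonpos hy₀ (mem_ball_iff_norm.mp hyρ).le (neg_nonpos.mpr hβ)
  calc _ = ∫⁻ _ in ball y₀ ρ, ENNReal.ofReal ((‖x - A y₀‖ + ‖A‖ * ρ) ^ (-γ) * ρ ^ (-β)) ∂μ :=
        (setLIntegral_const _ _).symm
    _ ≤ _ := setLIntegral_mono_ae' measurableSet_ball hbound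
    _ ≤ _ := setLIntegral_le_lintegral _ _

lemma ofReal_le_lintegral_of_isAddHaarMeasure [MeasurableSpace E] [BorelSpace E]
    [FiniteDimensional ℝ E] [Nontrivial E] (μ : Measure E) [μ.IsAddHaarMeasure]
    (A : E →L[ℝ] F) (hA : Function.Injective A) {γ β ρ r : ℝ} (hγ : 0 ≤ γ) (hβ : 0 ≤ β)
    (hρ : 0 < ρ) (hρr : ρ ≤ r) (x : F) (y₀ : E) :
    ENNReal.ofReal ((‖x - A y₀‖ + ‖A‖ * ρ) ^ (-γ) * ρ ^ ((Module.finrank ℝ E : ℝ) - β) *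
        μ.real (ball 0 1)) ≤
      ∫⁻ y, ENNReal.ofReal (‖x - A y‖ ^ (-γ) *
        Set.indicator (ball y₀ r) (fun y => ‖y - y₀‖ ^ (-β)) y) ∂μ := by
  convert ofReal_mul_measure_ball_le_lintegral μ A hA hγ hβ hρr x y₀ using 1
  rw [Measure.addHaar_ball_of_pos μ y₀ hρ, ← mul_assoc, ← ENNReal.ofReal_mul (by positivity),
    ← ofReal_measureReal, ← ENNReal.ofReal_mul (by positivity), ← Real.rpow_natCast,
    mul_assoc _ (ρ ^ (-β)), ← Real.rpow_add hρ, neg_add_eq_sub]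

end KernelLowerBound

lemma add_mul_div_rpow_mul_div_rpow {t M : ℝ} (ht : 0 < t) (hM : 0 < M) (γ d β : ℝ) :
    (t + M * (t / M)) ^ (-γ) * (t / M) ^ (d - β) = 2 ^ (-γ) * M ^ (β - d) * t ^ (d - β - γ) := by
  rw [mul_div_cancel₀ t hM.ne', ← two_mul, Real.mul_rpow zero_le_two ht.le,
    Real.div_rpow ht.le hM.le, ← neg_sub d β, Real.rpow_neg hM.le, sub_eq_add_neg (d - β),
    Real.rpow_add ht]
  ring

lemma mul_rpow_neg_mul_rpow {M r : ℝ} (hM : 0 ≤ M) (hr : 0 < r) (s : ℝ) :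
    (M * r) ^ (-s) * r ^ s = M ^ (-s) := by
  rw [Real.mul_rpow hM hr.le, mul_assoc, ← Real.rpow_add hr, neg_add_cancel, Real.rpow_zero,
    mul_one]

theorem stmt3_general {n : ℕ} (hn : 0 < n) (α β r : ℝ)
    (hαn : α < n) (hβ : 0 < β) (hr : 0 < r)
    (A : EuclideanSpace ℝ (Fin n) ≃L[ℝ] EuclideanSpace ℝ (Fin n))
    (y₀ : EuclideanSpace ℝ (Fin n)) :
    ∃ c : ℝ, 0 < c ∧
      ∀ x ∈ ball (A y₀) (‖(A : EuclideanSpace ℝ (Fin n) →L[ℝ] EuclideanSpace ℝ (Fin n))‖ * r),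
        ENNReal.ofReal (c * ‖x - A y₀‖ ^ (-(β - α))) ≤
          ∫⁻ y, ENNReal.ofReal (‖x - A y‖ ^ (-((n : ℝ) - α)) *
            Set.indicator (ball y₀ r) (fun y => ‖y - y₀‖ ^ (-β)) y) := by
  have : Nonempty (Fin n) := ⟨⟨0, hn⟩⟩
  have key := fun x ρ (hρ : 0 < ρ) (hρr : ρ ≤ r) =>
    ofReal_le_lintegral_of_isAddHaarMeasure volume
      (A : EuclideanSpace ℝ (Fin n) →L[ℝ] EuclideanSpace ℝ (Fin n)) A.injective
      (sub_nonneg.mpr hαn.le) hβ.le hρ hρr x y₀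
  simp only [finrank_euclideanSpace_fin, ContinuousLinearEquiv.coe_coe] at key
  set M := ‖(A : EuclideanSpace ℝ (Fin n) →L[ℝ] EuclideanSpace ℝ (Fin n))‖
  set ω := volume.real (ball (0 : EuclideanSpace ℝ (Fin n)) 1)
  have hM : 0 < M := A.norm_pos
  have hω : 0 < ω := ENNReal.toReal_pos (measure_ball_pos _ _ one_pos).ne' measure_ball_lt_top.ne
  refine ⟨ω * 2 ^ (-((n : ℝ) - α)) * M ^ (β - n), by positivity, fun x hx => ?_⟩
  rw [mem_ball, dist_eq_norm] at hx
  rcases eq_or_ne x (A y₀) with rfl | hxy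
  · rcases eq_or_ne β α with rfl | hβα
    · refine le_trans (ENNReal.ofReal_le_ofReal ?_) (key _ r hr le_rfl)
      simp only [sub_self, norm_zero, zero_add, neg_zero, Real.rpow_zero, mul_one]
      rw [mul_rpow_neg_mul_rpow hM.le hr, neg_sub]
      have h₂ : (2 : ℝ) ^ (β - n) ≤ 1 :=
        Real.rpow_le_one_of_one_le_of_nonpos one_le_two (by linarith)
      nlinarith [mul_pos hω (Real.rpow_pos_of_pos hM (β - n))]
    · rw [sub_self, norm_zero, Real.zero_rpow (by contrapose! hβα; linarith), mul_zero,
        ENNReal.ofReal_zero]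
      exact zero_le
  · have ht : 0 < ‖x - A y₀‖ := norm_pos_iff.mpr (sub_ne_zero.mpr hxy)
    convert key x (‖x - A y₀‖ / M) (by positivity) ((div_lt_iff₀' hM).mpr hx).le using 2
    rw [add_mul_div_rpow_mul_div_rpow ht hM, show (n : ℝ) - β - (n - α) = -(β - α) by ring]
    ring

/-- lower bound `T_A f(x) ≥ c |x − Ay₀|^{−(β−α)}` on `B(Ay₀, Mr)` for
`f = χ_{B(y₀,r)} |·−y₀|^{−β}`. -/
theorem stmt3 {n : ℕ} (hn : 0 < n) (α β r : ℝ)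
    (hα : 0 < α) (hαn : α < n) (hβ : 0 < β) (hβn : β < n) (hr : 0 < r)
    (A : EuclideanSpace ℝ (Fin n) ≃L[ℝ] EuclideanSpace ℝ (Fin n))
    (y₀ : EuclideanSpace ℝ (Fin n)) :
    ∃ c : ℝ, 0 < c ∧
      ∀ x ∈ ball (A y₀) (‖(A : EuclideanSpace ℝ (Fin n) →L[ℝ] EuclideanSpace ℝ (Fin n))‖ * r),
        ENNReal.ofReal (c * ‖x - A y₀‖ ^ (-(β - α))) ≤
          ∫⁻ y, ENNReal.ofReal (‖x - A y‖ ^ (-((n : ℝ) - α)) *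
            Set.indicator (ball y₀ r) (fun y => ‖y - y₀‖ ^ (-β)) y) :=
  stmt3_general hn α β r hαn hβ hr A y₀
end

section
/- Let 0 < α < n and let A be an invertible n×n matrix. Let p : ℝ^n → [1, ∞) be measurable, continuous at y₀ and at Ay₀ for some y₀ ∈ ℝ^n, with 1 ≤ p ≤ p₊ < n/α, and suppose p(Ay₀) > p(y₀). Define q(·) by 1/q(x) = 1/p(x) − α/n. Then there exists f ∈ L^{p(·)}(ℝ^n) such that T_A f ∉ L^{q(·)}(ℝ^n), where T_A f(x) = ∫ |x − Ay|^{−(n−α)} f(y) dy. -/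
open MeasureTheory Metric ENNReal

/-- The modular `∫ (|f(x)|/λ)^{p(x)} dx` of the variable exponent space. -/
noncomputable def modular {n : ℕ} (p : EuclideanSpace ℝ (Fin n) → ℝ)
    (f : EuclideanSpace ℝ (Fin n) → ℝ≥0∞) (lam : ℝ≥0∞) : ℝ≥0∞ :=
  ∫⁻ x, (f x / lam) ^ (p x)

/-- Membership in the variable exponent Lebesgue space `L^{p(·)}`. -/
def MemVarLp {n : ℕ} (p : EuclideanSpace ℝ (Fin n) → ℝ)
    (f : EuclideanSpace ℝ (Fin n) → ℝ≥0∞) : Prop :=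
  ∃ lam : ℝ≥0∞, 0 < lam ∧ lam ≠ ⊤ ∧ modular p f lam < ⊤

/-- The Luxemburg norm of `L^{p(·)}` (valued in `ℝ≥0∞`). -/
noncomputable def luxNorm {n : ℕ} (p : EuclideanSpace ℝ (Fin n) → ℝ)
    (f : EuclideanSpace ℝ (Fin n) → ℝ≥0∞) : ℝ≥0∞ :=
  sInf {lam : ℝ≥0∞ | 0 < lam ∧ modular p f lam ≤ 1}

/-- The fractional type operator `T_A f(x) = ∫ |x − Ay|^{−(n−α)} f(y) dy`. -/
noncomputable def TA {n : ℕ} (α : ℝ)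
    (A : EuclideanSpace ℝ (Fin n) ≃L[ℝ] EuclideanSpace ℝ (Fin n))
    (f : EuclideanSpace ℝ (Fin n) → ℝ) (x : EuclideanSpace ℝ (Fin n)) : ℝ≥0∞ :=
  ∫⁻ y, ENNReal.ofReal (‖x - A y‖ ^ (-((n : ℝ) - α))) * ENNReal.ofReal |f y|

/-- `|f|` as an `ℝ≥0∞`-valued function. -/
noncomputable def absE {n : ℕ} (f : EuclideanSpace ℝ (Fin n) → ℝ)
    (x : EuclideanSpace ℝ (Fin n)) : ℝ≥0∞ := ENNReal.ofReal |f x|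

/-!
Choose `p(y₀) < s < p(A y₀)` and take `f(y) = |y - y₀|^{-n/s}` near `y₀`. Since `p < s` near
`y₀`, `|f|^{p(·)}` is dominated by `|y - y₀|^{-β}` with `β < n`, hence integrable. For `x` near
`A y₀`, the kernel is at least `(2|x - A y₀|)^{α-n}` on the ball of radius `|x - A y₀| / (‖A‖ + 1)`
about `y₀`, so `T_A f(x) ≳ |x - A y₀|^{α - n/s}`. Near `A y₀` we have `q > σ` with
`1/σ = 1/s - α/n`, and `σ (α - n/s) = -n`; so for every `λ`, `(T_A f(x)/λ)^{q(x)}` dominates a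
multiple of the non-integrable `|x - A y₀|^{-n}`.
-/

section Singularity

variable {E : Type*} [NormedAddCommGroup E] [NormedSpace ℝ E] [FiniteDimensional ℝ E]
  [MeasurableSpace E] [BorelSpace E] [Nontrivial E] (μ : Measure E) [μ.IsAddHaarMeasure]

theorem lintegral_ball_norm_sub_rpow_neg_lt_top_iff (c : E) {r β : ℝ} (hr : 0 < r) :
    ∫⁻ x in ball c r, ENNReal.ofReal (‖x - c‖ ^ (-β)) ∂μ < ∞ ↔ β < Module.finrank ℝ E := by
  have htranslate : ∫⁻ x in ball c r, ENNReal.ofReal (‖x - c‖ ^ (-β)) ∂μ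
      = ∫⁻ x in ball 0 r, ENNReal.ofReal (‖x‖ ^ (-β)) ∂μ := by
    rw [← lintegral_indicator measurableSet_ball, ← lintegral_indicator measurableSet_ball,
      ← lintegral_add_right_eq_self _ c]
    congr with x
    simp only [Set.indicator, mem_ball, dist_eq_norm, sub_zero, add_sub_cancel_right]
  have hradial : Set.EqOn (fun y : ℝ => y ^ (Module.finrank ℝ E - 1) • y ^ (-β))
      (fun y => y ^ ((Module.finrank ℝ E : ℝ) - 1 - β)) (Set.Ioo 0 r) := by
    intro y ⟨hy, _⟩
    dsimp only
    rw [smul_eq_mul, ← Real.rpow_natCast, Nat.cast_sub Module.finrank_pos, ← Real.rpow_add hy,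
      Nat.cast_one, sub_eq_add_neg _ β]
  rw [htranslate, lt_top_iff_ne_top, lintegral_ofReal_ne_top_iff_integrable
    (measurable_norm.pow_const _).aestronglyMeasurable (ae_of_all _ fun _ => by positivity),
    ← IntegrableOn, integrableOn_fun_norm_addHaar μ (f := fun y => y ^ (-β)),
    integrableOn_congr_fun hradial measurableSet_Ioo, intervalIntegral.integrableOn_Ioo_rpow_iff hr]
  constructor <;> intro h <;> linarith

end Singularity

theorem inv_one_div_sub_lt_of_lt {s p q c : ℝ} (hs : 0 < s) (hsp : s < p)
    (hq : 1 / q = 1 / p - c) (hcp : c < 1 / p) : (1 / s - c)⁻¹ < q := by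
  have hq0 : 0 < 1 / q := by linarith
  have hpq : 1 / q < 1 / s - c := by
    have : 1 / p < 1 / s := one_div_lt_one_div_of_lt hs hsp
    linarith
  simpa using inv_strictAnti₀ hq0 hpq

section VariableExponent

variable {n : ℕ}

noncomputable def singularBump (y₀ : EuclideanSpace ℝ (Fin n)) (δ γ : ℝ) :
    EuclideanSpace ℝ (Fin n) → ℝ :=
  (ball y₀ δ).indicator fun y => ‖y - y₀‖ ^ (-γ)

theorem memVarLp_absE_singularBump [NeZero n] {p : EuclideanSpace ℝ (Fin n) → ℝ}
    {y₀ : EuclideanSpace ℝ (Fin n)} {δ γ β : ℝ} (hp : ∀ x, 0 < p x) (hδ0 : 0 < δ) (hδ1 : δ ≤ 1)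
    (hβ : β < n) (hpβ : ∀ x ∈ ball y₀ δ, γ * p x ≤ β) :
    MemVarLp p (absE (singularBump y₀ δ γ)) := by
  refine ⟨1, one_pos, one_ne_top, ?_⟩
  have hle : ∀ᵐ x, absE (singularBump y₀ δ γ) x ^ p x
      ≤ (ball y₀ δ).indicator (fun x => ENNReal.ofReal (‖x - y₀‖ ^ (-β))) x := by
    filter_upwards [measure_eq_zero_iff_ae_notMem.1 (measure_singleton y₀)] with x hx
    by_cases hxδ : x ∈ ball y₀ δ
    · have ht0 : 0 < ‖x - y₀‖ := norm_pos_iff.2 (sub_ne_zero.2 hx)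
      have ht1 : ‖x - y₀‖ ≤ 1 := (mem_ball_iff_norm.1 hxδ).le.trans hδ1
      rw [absE, singularBump, Set.indicator_of_mem hxδ, Set.indicator_of_mem hxδ,
        abs_of_nonneg (by positivity), ENNReal.ofReal_rpow_of_nonneg (by positivity) (hp x).le,
        ← Real.rpow_mul (norm_nonneg _)]
      exact ENNReal.ofReal_le_ofReal
        (Real.rpow_le_rpow_of_exponent_ge ht0 ht1 (by linarith [hpβ x hxδ]))
    · rw [absE, singularBump, Set.indicator_of_notMem hxδ, Set.indicator_of_notMem hxδ,
        abs_zero, ENNReal.ofReal_zero, ENNReal.zero_rpow_of_pos (hp x)]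
  calc modular p (absE (singularBump y₀ δ γ)) 1
      = ∫⁻ x, absE (singularBump y₀ δ γ) x ^ p x := by simp only [modular, div_one]
    _ ≤ ∫⁻ x in ball y₀ δ, ENNReal.ofReal (‖x - y₀‖ ^ (-β)) := by
      rw [← lintegral_indicator measurableSet_ball]
      exact lintegral_mono_ae hle
    _ < ∞ := by
      rwa [lintegral_ball_norm_sub_rpow_neg_lt_top_iff _ _ hδ0, finrank_euclideanSpace_fin]

theorem le_TA_singularBump [NeZero n] {α : ℝ} (hαn : α ≤ n)
    (A : EuclideanSpace ℝ (Fin n) ≃L[ℝ] EuclideanSpace ℝ (Fin n))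
    {y₀ x : EuclideanSpace ℝ (Fin n)} {δ γ r : ℝ} (hγ : 0 ≤ γ) (hrδ : r ≤ δ)
    (hrA : ‖(A : EuclideanSpace ℝ (Fin n) →L[ℝ] EuclideanSpace ℝ (Fin n))‖ * r ≤ ‖x - A y₀‖) :
    ENNReal.ofReal ((2 * ‖x - A y₀‖) ^ (-(n - α)) * r ^ (-γ)) * volume (ball y₀ r)
      ≤ TA α A (singularBump y₀ δ γ) x := by
  have hle : ∀ᵐ y, y ∈ ball y₀ r → ENNReal.ofReal ((2 * ‖x - A y₀‖) ^ (-(n - α)) * r ^ (-γ))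
      ≤ ENNReal.ofReal (‖x - A y‖ ^ (-(n - α))) * ENNReal.ofReal |singularBump y₀ δ γ y| := by
    -- off these two null points neither factor hits the junk value `0 ^ (-γ) = 0`
    filter_upwards [measure_eq_zero_iff_ae_notMem.1 (measure_singleton y₀),
      measure_eq_zero_iff_ae_notMem.1 (measure_singleton (A.symm x))] with y hy₀ hyx hyr
    have hxy : 0 < ‖x - A y‖ := by
      refine norm_pos_iff.2 (sub_ne_zero.2 fun h => hyx ?_)
      rw [Set.mem_singleton_iff, h, ContinuousLinearEquiv.symm_apply_apply]
    have hyy₀ : 0 < ‖y - y₀‖ := norm_pos_iff.2 (sub_ne_zero.2 hy₀)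
    have hyr' : ‖y - y₀‖ < r := mem_ball_iff_norm.1 hyr
    have hAy : ‖A (y₀ - y)‖
        ≤ ‖(A : EuclideanSpace ℝ (Fin n) →L[ℝ] EuclideanSpace ℝ (Fin n))‖ * r :=
      (A.toContinuousLinearMap.le_opNorm _).trans <| by
        rw [norm_sub_rev]; exact mul_le_mul_of_nonneg_left hyr'.le (norm_nonneg _)
    have hxy2 : ‖x - A y‖ ≤ 2 * ‖x - A y₀‖ :=
      calc ‖x - A y‖ = ‖(x - A y₀) + A (y₀ - y)‖ := by rw [map_sub, sub_add_sub_cancel]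
        _ ≤ 2 * ‖x - A y₀‖ := by linarith [norm_add_le (x - A y₀) (A (y₀ - y))]
    rw [singularBump, Set.indicator_of_mem (ball_subset_ball hrδ hyr),
      abs_of_nonneg (by positivity), ← ENNReal.ofReal_mul (by positivity)]
    exact ENNReal.ofReal_le_ofReal (mul_le_mul
      (Real.rpow_le_rpow_of_nonpos hxy hxy2 (by linarith))
      (Real.rpow_le_rpow_of_nonpos hyy₀ hyr'.le (by linarith))
      (Real.rpow_nonneg (hyy₀.trans hyr').le _) (by positivity))
  calc ENNReal.ofReal ((2 * ‖x - A y₀‖) ^ (-(n - α)) * r ^ (-γ)) * volume (ball y₀ r)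
      = ∫⁻ _ in ball y₀ r, ENNReal.ofReal ((2 * ‖x - A y₀‖) ^ (-(n - α)) * r ^ (-γ)) :=
        (setLIntegral_const _ _).symm
    _ ≤ ∫⁻ y in ball y₀ r, ENNReal.ofReal (‖x - A y‖ ^ (-(n - α)))
          * ENNReal.ofReal |singularBump y₀ δ γ y| := setLIntegral_mono_ae' measurableSet_ball hle
    _ ≤ TA α A (singularBump y₀ δ γ) x := setLIntegral_le_lintegral _ _

theorem exists_le_TA_singularBump [NeZero n] {α : ℝ} (hαn : α ≤ n)
    (A : EuclideanSpace ℝ (Fin n) ≃L[ℝ] EuclideanSpace ℝ (Fin n))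
    (y₀ : EuclideanSpace ℝ (Fin n)) {δ γ : ℝ} (hγ : 0 ≤ γ) :
    ∃ c > 0, ∀ x, 0 < ‖x - A y₀‖ → ‖x - A y₀‖ < δ →
      ENNReal.ofReal (c * ‖x - A y₀‖ ^ (α - γ)) ≤ TA α A (singularBump y₀ δ γ) x := by
  set M := ‖(A : EuclideanSpace ℝ (Fin n) →L[ℝ] EuclideanSpace ℝ (Fin n))‖ + 1
  have hM : 1 ≤ M := le_add_of_nonneg_left (norm_nonneg _)
  set V := (volume (ball (0 : EuclideanSpace ℝ (Fin n)) 1)).toReal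
  have hV : 0 < V := ENNReal.toReal_pos (measure_ball_pos _ _ one_pos).ne' measure_ball_lt_top.ne
  refine ⟨2 ^ (-(n - α)) * M ^ (γ - n) * V, by positivity, fun x ht hδ => ?_⟩
  set t := ‖x - A y₀‖
  have hr : 0 < t / M := by positivity
  have hvol : volume (ball y₀ (t / M)) = ENNReal.ofReal ((t / M) ^ n * V) := by
    rw [Measure.addHaar_ball_of_pos _ _ hr, finrank_euclideanSpace_fin,
      ENNReal.ofReal_mul (by positivity), ENNReal.ofReal_toReal measure_ball_lt_top.ne]
  have hconst : (2 * t) ^ (-(n - α)) * (t / M) ^ (-γ) * ((t / M) ^ n * V)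
      = 2 ^ (-(n - α)) * M ^ (γ - n) * V * t ^ (α - γ) := by
    rw [← Real.rpow_natCast, Real.mul_rpow (by norm_num) ht.le,
      Real.div_rpow ht.le (by positivity), Real.div_rpow ht.le (by positivity),
      Real.rpow_neg (by positivity : (0:ℝ) ≤ M), Real.rpow_sub (by positivity : (0:ℝ) < M),
      show α - γ = -(n - α) + -γ + n by ring, Real.rpow_add ht, Real.rpow_add ht]
    field_simp
  calc ENNReal.ofReal (2 ^ (-(n - α)) * M ^ (γ - n) * V * t ^ (α - γ))
      = ENNReal.ofReal ((2 * t) ^ (-(n - α)) * (t / M) ^ (-γ)) * volume (ball y₀ (t / M)) := by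
        rw [hvol, ← ENNReal.ofReal_mul (by positivity), hconst]
    _ ≤ TA α A (singularBump y₀ δ γ) x :=
        le_TA_singularBump hαn A hγ ((div_le_self ht.le hM).trans hδ.le)
          (by
            rw [mul_div_assoc']
            exact div_le_of_le_mul₀ (by positivity) (by positivity) (by nlinarith))

open Filter in
theorem not_memVarLp_of_rpow_neg_le [NeZero n] {q : EuclideanSpace ℝ (Fin n) → ℝ}
    {T : EuclideanSpace ℝ (Fin n) → ℝ≥0∞} {a : EuclideanSpace ℝ (Fin n)} {r σ c : ℝ}
    (hr : 0 < r) (hσ : 0 < σ) (hc : 0 < c) (hq : ∀ x ∈ ball a r, σ ≤ q x)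
    (hT : ∀ x ∈ ball a r, x ≠ a → ENNReal.ofReal (c * ‖x - a‖ ^ (-(n / σ))) ≤ T x) :
    ¬ MemVarLp q T := by
  rintro ⟨lam, hlam0, hlamtop, hfin⟩
  set L := lam.toReal
  have hL : 0 < L := ENNReal.toReal_pos hlam0.ne' hlamtop
  have hnσ : 0 < (n : ℝ) / σ := div_pos (Nat.cast_pos.2 (NeZero.pos n)) hσ
  obtain ⟨ε, hε, hεL⟩ := mem_nhdsGT_iff_exists_Ioo_subset.1
    (((tendsto_rpow_neg_nhdsGT_zero (neg_neg_of_pos hnσ)).const_mul_atTop hc).eventually_ge_atTop L)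
  set ρ := min r ε
  -- on `ball a ρ` the base `T x / λ` is at least `1`, so the exponent `q x` may be lowered to `σ`
  have hlow : ∀ᵐ x, x ∈ ball a ρ →
      ENNReal.ofReal ((c / L) ^ σ) * ENNReal.ofReal (‖x - a‖ ^ (-(n : ℝ))) ≤ (T x / lam) ^ q x := by
    filter_upwards [measure_eq_zero_iff_ae_notMem.1 (measure_singleton a)] with x hxa hxρ
    have hxa : x ≠ a := hxa
    have ht : 0 < ‖x - a‖ := norm_pos_iff.2 (sub_ne_zero.2 hxa)
    have hxr : x ∈ ball a r := ball_subset_ball (min_le_left _ _) hxρ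
    have htε : ‖x - a‖ < ε := (mem_ball_iff_norm.1 hxρ).trans_le (min_le_right _ _)
    set u := c * ‖x - a‖ ^ (-(n / σ)) / L with hu_def
    have hu : 1 ≤ u := (one_le_div hL).2 (hεL ⟨ht, htε⟩)
    have hu_rpow : (c / L) ^ σ * ‖x - a‖ ^ (-(n : ℝ)) = u ^ σ := by
      rw [hu_def, mul_div_right_comm, Real.mul_rpow (by positivity) (by positivity),
        ← Real.rpow_mul ht.le, neg_mul, div_mul_cancel₀ _ hσ.ne']
    calc ENNReal.ofReal ((c / L) ^ σ) * ENNReal.ofReal (‖x - a‖ ^ (-(n : ℝ)))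
        = ENNReal.ofReal u ^ σ := by
          rw [← ENNReal.ofReal_mul (by positivity), hu_rpow,
            ENNReal.ofReal_rpow_of_nonneg (by positivity) hσ.le]
      _ ≤ ENNReal.ofReal u ^ q x :=
          ENNReal.rpow_le_rpow_of_exponent_le (ENNReal.one_le_ofReal.2 hu) (hq x hxr)
      _ ≤ (T x / lam) ^ q x := by
          refine ENNReal.rpow_le_rpow ?_ (hσ.le.trans (hq x hxr))
          rw [ENNReal.ofReal_div_of_pos hL, ENNReal.ofReal_toReal hlamtop]
          exact ENNReal.div_le_div_right (hT x hxr hxa) _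
  have hsing : ∫⁻ x in ball a ρ, ENNReal.ofReal (‖x - a‖ ^ (-(n : ℝ))) = ∞ := by
    rw [← not_lt_top_iff, lintegral_ball_norm_sub_rpow_neg_lt_top_iff _ _ (lt_min hr hε),
      finrank_euclideanSpace_fin]
    exact lt_irrefl _
  refine (lt_top_iff_ne_top.1 hfin) (top_le_iff.1 ?_)
  calc ∞ = ∫⁻ x in ball a ρ,
        ENNReal.ofReal ((c / L) ^ σ) * ENNReal.ofReal (‖x - a‖ ^ (-(n : ℝ))) := by
        rw [lintegral_const_mul' _ _ ENNReal.ofReal_ne_top, hsing,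
          ENNReal.mul_top (by positivity)]
    _ ≤ ∫⁻ x in ball a ρ, (T x / lam) ^ q x := setLIntegral_mono_ae' measurableSet_ball hlow
    _ ≤ modular q T lam := setLIntegral_le_lintegral _ _

end VariableExponent

theorem stmt4_general {n : ℕ} (α : ℝ) (hα : 0 < α) (hαn : α < n)
    (A : EuclideanSpace ℝ (Fin n) ≃L[ℝ] EuclideanSpace ℝ (Fin n))
    (p q : EuclideanSpace ℝ (Fin n) → ℝ)
    (y₀ : EuclideanSpace ℝ (Fin n))
    (hc1 : ContinuousAt p y₀) (hc2 : ContinuousAt p (A y₀))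
    (hp1 : ∀ x, 1 ≤ p x)
    (hpplus : ∃ P : ℝ, (∀ x, p x ≤ P) ∧ P * α < n)
    (hgt : p (A y₀) > p y₀)
    (hq : ∀ x, 1 / q x = 1 / p x - α / n) :
    ∃ f : EuclideanSpace ℝ (Fin n) → ℝ,
      MemVarLp p (absE f) ∧ ¬ MemVarLp q (TA α A f) := by
  obtain ⟨P, hpP, hPα⟩ := hpplus
  have hn : (0 : ℝ) < n := hα.trans hαn
  have : NeZero n := ⟨by rintro rfl; simp at hn⟩
  obtain ⟨s, hs₀, hs₁⟩ := exists_between hgt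
  obtain ⟨s', hs'₀, hs'₁⟩ := exists_between hs₀
  have hs : 0 < s := by linarith [hp1 y₀]
  have hαs : α * s < n := by nlinarith [hpP (A y₀)]
  have hαp : ∀ x, α / n < 1 / p x := fun x => by
    rw [div_lt_div_iff₀ hn (by linarith [hp1 x])]; nlinarith [hpP x]
  obtain ⟨ε, hε, hps'⟩ := Metric.eventually_nhds_iff_ball.1
    (hc1.eventually_lt continuousAt_const hs'₀)
  obtain ⟨r, hr, hsp⟩ := Metric.eventually_nhds_iff_ball.1
    (continuousAt_const.eventually_lt hc2 hs₁)
  set δ := min ε 1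
  have hδ : 0 < δ := lt_min hε one_pos
  set σ := (1 / s - α / n)⁻¹
  have hσ : 0 < σ := inv_pos.2 <| by
    rwa [sub_pos, div_lt_div_iff₀ hn hs, one_mul]
  have hexp : α - n / s = -(n / σ) := by simp only [σ, div_inv_eq_mul]; field_simp; ring
  obtain ⟨c, hc, hcT⟩ := exists_le_TA_singularBump hαn.le A y₀ (δ := δ) (γ := n / s) (by positivity)
  refine ⟨singularBump y₀ δ (n / s), memVarLp_absE_singularBump (β := n / s * s')
    (fun x => by linarith [hp1 x]) hδ (min_le_right _ _) ?_ ?_, ?_⟩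
  · rw [div_mul_eq_mul_div, div_lt_iff₀ hs]; exact mul_lt_mul_of_pos_left hs'₁ hn
  · exact fun x hx => mul_le_mul_of_nonneg_left
      (hps' x (ball_subset_ball (min_le_left _ _) hx)).le (by positivity)
  refine not_memVarLp_of_rpow_neg_le (lt_min hr hδ) hσ hc
    (fun x hx => (inv_one_div_sub_lt_of_lt hs (hsp x (ball_subset_ball (min_le_left _ _) hx))
      (hq x) (hαp x)).le) fun x hx hxa => ?_
  rw [← hexp]
  exact hcT x (norm_pos_iff.2 (sub_ne_zero.2 hxa))
    ((mem_ball_iff_norm.1 hx).trans_le (min_le_right _ _))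

/-- if `p(Ay₀) > p(y₀)` at points of continuity, there is `f ∈ L^{p(·)}`
with `T_A f ∉ L^{q(·)}`, `1/q = 1/p − α/n`. -/
theorem stmt4 {n : ℕ} (α : ℝ) (hα : 0 < α) (hαn : α < n)
    (A : EuclideanSpace ℝ (Fin n) ≃L[ℝ] EuclideanSpace ℝ (Fin n))
    (p q : EuclideanSpace ℝ (Fin n) → ℝ) (hpmeas : Measurable p)
    (y₀ : EuclideanSpace ℝ (Fin n))
    (hc1 : ContinuousAt p y₀) (hc2 : ContinuousAt p (A y₀))
    (hp1 : ∀ x, 1 ≤ p x)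
    (hpplus : ∃ P : ℝ, (∀ x, p x ≤ P) ∧ P * α < n)
    (hgt : p (A y₀) > p y₀)
    (hq : ∀ x, 1 / q x = 1 / p x - α / n) :
    ∃ f : EuclideanSpace ℝ (Fin n) → ℝ,
      MemVarLp p (absE f) ∧ ¬ MemVarLp q (TA α A f) :=
  stmt4_general α hα hαn A p q y₀ hc1 hc2 hp1 hpplus hgt hq
end

section
/- Let A₁, …, A_m be invertible n×n matrices and p̃' : ℝ^n → [1, ∞) a measurable exponent satisfying p̃'(A_j x) = p̃'(x) a.e. for each j. Then for every g ∈ L^{p̃'(·)}(ℝ^n) and each j, ‖g ∘ A_j‖_{p̃'(·)} ≤ D^{1/(p̃')₋} ‖g‖_{p̃'(·)} if D > 1, and ‖g ∘ A_j‖_{p̃'(·)} ≤ ‖g‖_{p̃'(·)} if D ≤ 1, where D = max_j |det(A_j^{−1})|. -/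
open MeasureTheory Metric ENNReal

/-!
A linear change of variables `y = A x` multiplies the modular by `|det A⁻¹|`, because the exponent
is `A`-invariant. Dividing `λ` by `c ≥ 1` multiplies the modular by at most `c ^ (-p₋)`, where
`p₋` is the essential infimum of the exponent. With `c = D ^ (1 / p₋)` the two factors cancel, so
every admissible `λ` for `g` gives the admissible `c λ` for `g ∘ A`; when `D ≤ 1` one can take `c = 1`.
-/

theorem Filter.isCoboundedUnder_ge_ae {α : Type*} [MeasurableSpace α] (μ : Measure α) [NeZero μ]
    (f : α → ℝ) : Filter.IsCoboundedUnder (· ≥ ·) (ae μ) f := by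
  obtain ⟨k, hk⟩ : ∃ k : ℕ, ¬ ∀ᵐ x ∂μ, (k : ℝ) ≤ f x := by
    by_contra! h
    obtain ⟨x, hx⟩ := (ae_all_iff.2 h).exists
    obtain ⟨k, hk⟩ := exists_nat_gt (f x)
    exact (hx k).not_gt hk
  refine ⟨k, fun a ha => ?_⟩
  by_contra! hka
  exact hk ((Filter.eventually_map.1 ha).mono fun x hx => hka.le.trans hx)

theorem lintegral_comp_continuousLinearEquiv {E : Type*} [NormedAddCommGroup E]
    [NormedSpace ℝ E] [MeasurableSpace E] [BorelSpace E] [FiniteDimensional ℝ E]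
    (μ : Measure E) [μ.IsAddHaarMeasure] (A : E ≃L[ℝ] E) (F : E → ℝ≥0∞) :
    ∫⁻ x, F (A x) ∂μ
      = ENNReal.ofReal |LinearMap.det ((A.symm : E →L[ℝ] E) : E →ₗ[ℝ] E)| * ∫⁻ x, F x ∂μ := by
  have hmap : Measure.map A μ
      = ENNReal.ofReal |LinearMap.det ((A.symm : E →L[ℝ] E) : E →ₗ[ℝ] E)| • μ := by
    have hA : LinearMap.det ((A : E →L[ℝ] E) : E →ₗ[ℝ] E) ≠ 0 :=
      (LinearEquiv.isUnit_det' A.toLinearEquiv).ne_zero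
    rw [show LinearMap.det ((A.symm : E →L[ℝ] E) : E →ₗ[ℝ] E) = _ from
      LinearEquiv.det_coe_symm A.toLinearEquiv]
    exact Measure.map_linearMap_addHaar_eq_smul_addHaar μ hA
  rw [← smul_eq_mul, ← lintegral_smul_measure, ← hmap]
  exact (lintegral_map_equiv F A.toHomeomorph.toMeasurableEquiv).symm

section Modular

variable {n : ℕ} {p : EuclideanSpace ℝ (Fin n) → ℝ}

theorem modular_comp_continuousLinearEquiv
    (A : EuclideanSpace ℝ (Fin n) ≃L[ℝ] EuclideanSpace ℝ (Fin n))
    (hp : ∀ᵐ x, p (A x) = p x) (f : EuclideanSpace ℝ (Fin n) → ℝ≥0∞) (lam : ℝ≥0∞) :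
    modular p (fun x => f (A x)) lam
      = ENNReal.ofReal
          |LinearMap.det ((A.symm : EuclideanSpace ℝ (Fin n) →L[ℝ] EuclideanSpace ℝ (Fin n)) :
            EuclideanSpace ℝ (Fin n) →ₗ[ℝ] EuclideanSpace ℝ (Fin n))| * modular p f lam := by
  unfold modular
  rw [← lintegral_comp_continuousLinearEquiv volume A]
  refine lintegral_congr_ae ?_
  filter_upwards [hp] with x hx
  rw [hx]

theorem modular_mul_le {f : EuclideanSpace ℝ (Fin n) → ℝ≥0∞} {q : ℝ} (hq : 0 ≤ q)
    (hpq : ∀ᵐ x, q ≤ p x) {c : ℝ≥0∞} (hc : 1 ≤ c) (hc' : c ≠ ⊤) (lam : ℝ≥0∞) :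
    modular p f (c * lam) ≤ (c ^ q)⁻¹ * modular p f lam := by
  have hc0 : c ≠ 0 := (one_pos.trans_le hc).ne'
  rw [modular, modular, ← lintegral_const_mul' _ _ (by simp [hc0, hq])]
  refine lintegral_mono_ae ?_
  filter_upwards [hpq] with x hx
  calc (f x / (c * lam)) ^ p x = c⁻¹ ^ p x * (f x / lam) ^ p x := by
        rw [← ENNReal.mul_rpow_of_nonneg _ _ (hq.trans hx), div_eq_mul_inv, div_eq_mul_inv,
          ENNReal.mul_inv (Or.inl hc0) (Or.inl hc'), mul_left_comm]
    _ ≤ c⁻¹ ^ q * (f x / lam) ^ p x := by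
        gcongr ?_ * _
        exact ENNReal.rpow_le_rpow_of_exponent_ge (ENNReal.inv_le_one.2 hc) hx
    _ = (c ^ q)⁻¹ * (f x / lam) ^ p x := by rw [ENNReal.inv_rpow]

theorem luxNorm_le_mul_of_modular_le_one {f g : EuclideanSpace ℝ (Fin n) → ℝ≥0∞} {c : ℝ≥0∞}
    (hc0 : c ≠ 0) (hct : c ≠ ⊤) (h : ∀ lam, modular p f lam ≤ 1 → modular p g (c * lam) ≤ 1) :
    luxNorm p g ≤ c * luxNorm p f := by
  rw [mul_comm, ← ENNReal.div_le_iff_le_mul (Or.inl hc0) (Or.inl hct)]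
  refine le_sInf fun lam ⟨hlam0, hlam1⟩ => ?_
  rw [ENNReal.div_le_iff_le_mul (Or.inl hc0) (Or.inl hct), mul_comm]
  exact sInf_le ⟨ENNReal.mul_pos hc0 hlam0.ne', h lam hlam1⟩

end Modular

theorem stmt9_general {n m : ℕ}
    (A : Fin m → (EuclideanSpace ℝ (Fin n) ≃L[ℝ] EuclideanSpace ℝ (Fin n)))
    (p' : EuclideanSpace ℝ (Fin n) → ℝ) (hp1 : ∀ x, 1 ≤ p' x)
    (hinv : ∀ j, ∀ᵐ x : EuclideanSpace ℝ (Fin n), p' (A j x) = p' x)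
    (D : ℝ)
    (hD : IsGreatest (Set.range fun j =>
      |LinearMap.det (((A j).symm : EuclideanSpace ℝ (Fin n) →L[ℝ] EuclideanSpace ℝ (Fin n)) :
        EuclideanSpace ℝ (Fin n) →ₗ[ℝ] EuclideanSpace ℝ (Fin n))|) D) :
    ∀ g : EuclideanSpace ℝ (Fin n) → ℝ, MemVarLp p' (absE g) → ∀ j : Fin m,
      (1 < D → luxNorm p' (absE (fun x => g (A j x))) ≤
        ENNReal.ofReal (D ^ (1 / essInf p' volume)) * luxNorm p' (absE g)) ∧
      (D ≤ 1 → luxNorm p' (absE (fun x => g (A j x))) ≤ luxNorm p' (absE g)) := by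
  intro g _ j
  set pm := essInf p' volume
  have hpm1 : 1 ≤ pm := le_essInf_of_ae_le 1 (ae_of_all _ hp1) (Filter.isCoboundedUnder_ge_ae _ _)
  have hpm : ∀ᵐ x, pm ≤ p' x := ae_essInf_le (Filter.isBoundedUnder_of ⟨1, hp1⟩)
  have hdet := ENNReal.ofReal_le_ofReal (hD.2 ⟨j, rfl⟩)
  have hmod (lam) : modular p' (absE fun x => g (A j x)) lam = _ :=
    modular_comp_continuousLinearEquiv (A j) (hinv j) (absE g) lam
  constructor
  · intro hD1
    have hD0 : ENNReal.ofReal D ≠ 0 := by simp [hD1.trans' one_pos]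
    set c := ENNReal.ofReal (D ^ (1 / pm))
    have hc1 : 1 ≤ c := ENNReal.one_le_ofReal.2 (Real.one_le_rpow hD1.le (by positivity))
    have hcpm : c ^ pm = ENNReal.ofReal D := by
      rw [ENNReal.ofReal_rpow_of_nonneg (by positivity) (by positivity), one_div,
        Real.rpow_inv_rpow (hD1.trans' one_pos).le (by positivity)]
    refine luxNorm_le_mul_of_modular_le_one (one_pos.trans_le hc1).ne' ofReal_ne_top
      fun lam hlam => ?_
    calc modular p' (absE fun x => g (A j x)) (c * lam)
        ≤ ENNReal.ofReal D * ((ENNReal.ofReal D)⁻¹ * modular p' (absE g) lam) := by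
          rw [hmod]
          gcongr
          exact hcpm ▸ modular_mul_le (by positivity) hpm hc1 ofReal_ne_top lam
      _ ≤ 1 := by
          rw [← mul_assoc, ENNReal.mul_inv_cancel hD0 ofReal_ne_top, one_mul]
          exact hlam
  · intro hD1
    simpa using luxNorm_le_mul_of_modular_le_one one_ne_zero one_ne_top fun lam hlam => by
      rw [one_mul, hmod]
      exact mul_le_one' (hdet.trans (ENNReal.ofReal_le_one.2 hD1)) hlam

/-- `‖g ∘ A_j‖_{p̃'(·)} ≤ D^{1/(p̃')₋} ‖g‖_{p̃'(·)}` (resp. `≤ ‖g‖` if `D ≤ 1`),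
where `D = max_j |det A_j⁻¹|` and `p̃'` is invariant under each `A_j`. -/
theorem stmt9 {n m : ℕ}
    (A : Fin m → (EuclideanSpace ℝ (Fin n) ≃L[ℝ] EuclideanSpace ℝ (Fin n)))
    (p' : EuclideanSpace ℝ (Fin n) → ℝ) (hpmeas : Measurable p') (hp1 : ∀ x, 1 ≤ p' x)
    (hinv : ∀ j, ∀ᵐ x : EuclideanSpace ℝ (Fin n), p' (A j x) = p' x)
    (D : ℝ)
    (hD : IsGreatest (Set.range fun j =>
      |LinearMap.det (((A j).symm : EuclideanSpace ℝ (Fin n) →L[ℝ] EuclideanSpace ℝ (Fin n)) :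
        EuclideanSpace ℝ (Fin n) →ₗ[ℝ] EuclideanSpace ℝ (Fin n))|) D) :
    ∀ g : EuclideanSpace ℝ (Fin n) → ℝ, MemVarLp p' (absE g) → ∀ j : Fin m,
      (1 < D → luxNorm p' (absE (fun x => g (A j x))) ≤
        ENNReal.ofReal (D ^ (1 / essInf p' volume)) * luxNorm p' (absE g)) ∧
      (D ≤ 1 → luxNorm p' (absE (fun x => g (A j x))) ≤ luxNorm p' (absE g)) :=
  stmt9_general A p' hp1 hinv D hD
end
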